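/- arXiv:0712.1074 — 2 statements merged into one kernel-verified Lean document; each statement's English description precedes it below -/
import Mathlib

section
/- Let k ≥ 2 and d ≥ 1 be integers, let Λ ⊆ F_2^n belong to the family 𝚲(2dk) with |Λ| ≥ 4d², and let Q be a subset of d·̇Λ. Then for every integer p with 2 ≤ p ≤ k one has T_p(Q) ≤ 2^{8dp} p^{dp} |Q|^p. -/
open Finset

/-- `T_k(A)`: the number of `2k`-tuples `(a_1,…,a_k,a'_1,…,a'_k) ∈ A^{2k}` with
`a_1+⋯+a_k = a'_1+⋯+a'_k`. -/
def addEnergy {G : Type*} [AddCommGroup G] [DecidableEq G] (k : ℕ) (A : Finset G) : ℕ :=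
  (((Fintype.piFinset fun _ : Fin k => A) ×ˢ (Fintype.piFinset fun _ : Fin k => A)).filter
    fun v => ∑ i, v.1 i = ∑ i, v.2 i).card

/-- `Λ` belongs to the family `𝚲(m)`: no nonempty subset of `Λ` of size at most `m`
has zero sum. -/
def InLambdaFamily {G : Type*} [AddCommGroup G] (m : ℕ) (Λ : Finset G) : Prop :=
  ∀ S ⊆ Λ, S.Nonempty → S.card ≤ m → ∑ x ∈ S, x ≠ 0

/-- `d ·̇ Λ`: the set of all sums of `d` pairwise distinct elements of `Λ`. -/
def dDot {G : Type*} [AddCommGroup G] [DecidableEq G] (d : ℕ) (Λ : Finset G) : Finset G :=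
  (Λ.powersetCard d).image fun S => ∑ x ∈ S, x

/-!
Write each `q ∈ Q` as the sum of a `d`-subset `φ q` of `Λ`. If `q₁ + ⋯ + q_p = q'₁ + ⋯ + q'_p`,
then, in characteristic two, the elements lying in an odd number of the `2p` sets `φ qᵢ`, `φ q'ᵢ`
sum to zero; there are at most `2dp ≤ 2dk` of them, so `Λ ∈ 𝚲(2dk)` forces each element to occur
an even number of times. Hence `T_p(Q)` is at most the number of such "even" `2p`-tuples from
`𝒯 = φ(Q)`; summing over the sign cube `{±1}^G`, `2^{|G|}` times that number is the sum of the
`2p`-th powers of the multilinear polynomial `∑_{S ∈ 𝒯} ∏_{i ∈ S} xᵢ`. The Bonami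
hypercontractive inequality bounds this by `2^{|G|} (∑_{S ∈ 𝒯} (2p-1)^{|S|})^p`, and
`∑_{S ∈ 𝒯} (2p-1)^{|S|} ≤ (2p-1)^d |𝒯| ≤ (2p)^d |Q|`.
Bonami's inequality itself is proved one coordinate at a time: symmetrizing in `x_v` reduces it
to the two-point inequality `(a+b)^{2p} + (a-b)^{2p} ≤ 2 (a² + (2p-1) b²)^p`, and Minkowski's
inequality in `L^p` combines the two halves.
-/

-- Passing from `j` to `j + 1` multiplies the left side by `(2p-2j)(2p-2j-1) / ((2j+1)(2j+2))`
-- and the right side by the larger factor `(p-j)(2p-1) / (j+1)`.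
theorem Nat.choose_two_mul_le (p j : ℕ) :
    (2 * p).choose (2 * j) ≤ p.choose j * (2 * p - 1) ^ j := by
  induction j with
  | zero => simp
  | succ j ih =>
    rcases Nat.lt_or_ge j p with hj | hj
    · obtain ⟨m, rfl⟩ : ∃ m, p = j + m + 1 := ⟨p - j - 1, by omega⟩
      have h1 := Nat.choose_succ_right_eq (2 * (j + m + 1)) (2 * j)
      have h2 := Nat.choose_succ_right_eq (2 * (j + m + 1)) (2 * j + 1)
      have h3 := Nat.choose_succ_right_eq (j + m + 1) j
      rw [show 2 * (j + m + 1) - 2 * j = 2 * m + 2 by omega] at h1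
      rw [show 2 * (j + m + 1) - (2 * j + 1) = 2 * m + 1 by omega] at h2
      rw [show j + m + 1 - j = m + 1 by omega] at h3
      rw [show 2 * (j + m + 1) - 1 = 2 * j + 2 * m + 1 by omega] at ih ⊢
      refine le_of_mul_le_mul_right ?_ (by positivity : 0 < (2 * j + 1) * (2 * j + 2))
      calc (2 * (j + m + 1)).choose (2 * (j + 1)) * ((2 * j + 1) * (2 * j + 2))
          = (2 * (j + m + 1)).choose (2 * j) * ((2 * m + 2) * (2 * m + 1)) := by
            rw [show 2 * (j + 1) = 2 * j + 1 + 1 by ring]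
            linear_combination (2 * j + 1) * h2 + (2 * m + 1) * h1
        _ ≤ (j + m + 1).choose j * (2 * j + 2 * m + 1) ^ j
              * ((2 * m + 2) * ((2 * j + 2 * m + 1) * (2 * j + 1))) := by
            gcongr; nlinarith
        _ = (j + m + 1).choose (j + 1) * (2 * j + 2 * m + 1) ^ (j + 1)
              * ((2 * j + 1) * (2 * j + 2)) := by
            linear_combination 2 * (2 * j + 1) * (2 * j + 2 * m + 1) ^ (j + 1) * h3.symm
    · simp [Nat.choose_eq_zero_of_lt (by omega : 2 * p < 2 * (j + 1))]

theorem sum_range_two_mul_add_one_neg_one_pow {R : Type*} [CommRing R] (t : ℕ → R) (p : ℕ) :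
    ∑ k ∈ range (2 * p + 1), (1 + (-1) ^ k) * t k = 2 * ∑ j ∈ range (p + 1), t (2 * j) := by
  induction p with
  | zero => norm_num
  | succ p ih =>
    rw [show 2 * (p + 1) + 1 = 2 * p + 1 + 1 + 1 by ring, sum_range_succ, sum_range_succ, ih,
      sum_range_succ _ (p + 1), Odd.neg_one_pow ⟨p, rfl⟩, Even.neg_one_pow ⟨p + 1, by ring⟩,
      show 2 * p + 1 + 1 = 2 * (p + 1) by ring]
    ring

theorem Nat.cast_choose_two_mul_le {p j : ℕ} (hj : j ≤ p) :
    ((2 * p).choose (2 * j) : ℝ) ≤ p.choose j * (2 * p - 1 : ℝ) ^ j := by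
  rcases Nat.eq_zero_or_pos j with rfl | hj0
  · simp
  have h2p : ((2 * p - 1 : ℕ) : ℝ) = 2 * p - 1 := by
    rw [Nat.cast_sub (by omega)]; push_cast; ring
  rw [← h2p]
  exact_mod_cast Nat.choose_two_mul_le p j

theorem add_pow_two_mul_add_sub_pow_two_mul_le (a b : ℝ) (p : ℕ) :
    (a + b) ^ (2 * p) + (a - b) ^ (2 * p) ≤ 2 * (a ^ 2 + (2 * p - 1) * b ^ 2) ^ p := by
  have expand : (a + b) ^ (2 * p) + (a - b) ^ (2 * p)
      = 2 * ∑ j ∈ range (p + 1), b ^ (2 * j) * a ^ (2 * p - 2 * j) * (2 * p).choose (2 * j) := by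
    rw [← sum_range_two_mul_add_one_neg_one_pow
        (fun k => b ^ k * a ^ (2 * p - k) * ((2 * p).choose k : ℝ)), add_comm a, sub_eq_neg_add,
      add_pow, add_pow, ← sum_add_distrib]
    refine sum_congr rfl fun k _ => ?_
    rw [neg_pow]; ring
  rw [expand, add_comm (a ^ 2), add_pow]
  refine mul_le_mul_of_nonneg_left (sum_le_sum fun j hj => ?_) zero_le_two
  have hjp : j ≤ p := Nat.lt_succ_iff.mp (mem_range.mp hj)
  calc b ^ (2 * j) * a ^ (2 * p - 2 * j) * (2 * p).choose (2 * j)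
      = (b ^ 2) ^ j * (a ^ 2) ^ (p - j) * (2 * p).choose (2 * j) := by
        rw [← Nat.mul_sub, pow_mul, pow_mul]
    _ ≤ (b ^ 2) ^ j * (a ^ 2) ^ (p - j) * (p.choose j * (2 * p - 1 : ℝ) ^ j) := by
        gcongr; exact Nat.cast_choose_two_mul_le hjp
    _ = ((2 * p - 1) * b ^ 2) ^ j * (a ^ 2) ^ (p - j) * p.choose j := by rw [mul_pow]; ring

theorem sum_add_pow_le_of_sum_pow_le {α : Type*} {s : Finset α} {f g : α → ℝ} {a b C : ℝ}
    {p : ℕ} (hp : 1 ≤ p) (hf : ∀ i ∈ s, 0 ≤ f i) (hg : ∀ i ∈ s, 0 ≤ g i) (ha : 0 ≤ a)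
    (hb : 0 ≤ b) (hC : 0 ≤ C) (hfa : ∑ i ∈ s, f i ^ p ≤ C * a ^ p)
    (hgb : ∑ i ∈ s, g i ^ p ≤ C * b ^ p) :
    ∑ i ∈ s, (f i + g i) ^ p ≤ C * (a + b) ^ p := by
  have hr : (0 : ℝ) < p := by exact_mod_cast hp
  have root {x y : ℝ} (hx : 0 ≤ x) (hy : 0 ≤ y) :
      x ≤ C * y ^ p ↔ x ^ (1 / (p : ℝ)) ≤ C ^ (1 / (p : ℝ)) * y := by
    rw [one_div, Real.rpow_inv_le_iff_of_pos hx (by positivity) hr,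
      Real.mul_rpow (by positivity) hy, Real.rpow_inv_rpow hC hr.ne', Real.rpow_natCast]
  have minkowski := Real.Lp_add_le_of_nonneg s (by exact_mod_cast hp : (1 : ℝ) ≤ p) hf hg
  simp only [Real.rpow_natCast] at minkowski
  rw [root (sum_nonneg fun i hi => pow_nonneg (add_nonneg (hf i hi) (hg i hi)) p)
    (add_nonneg ha hb)]
  calc _ ≤ _ := minkowski
    _ ≤ C ^ (1 / (p : ℝ)) * a + C ^ (1 / (p : ℝ)) * b :=
      add_le_add ((root (sum_nonneg fun i hi => pow_nonneg (hf i hi) p) ha).1 hfa)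
        ((root (sum_nonneg fun i hi => pow_nonneg (hg i hi) p) hb).1 hgb)
    _ = _ := by ring

section SignCube

variable {ι : Type*} [Fintype ι] [DecidableEq ι]

variable (ι) in
noncomputable def signCube : Finset (ι → ℝ) :=
  Fintype.piFinset fun _ => {-1, 1}

theorem card_signCube : #(signCube ι) = 2 ^ Fintype.card ι := by
  rw [signCube, Fintype.card_piFinset, prod_const, card_univ, card_pair (by norm_num)]

theorem sq_eq_one_of_mem_signCube {x : ι → ℝ} (hx : x ∈ signCube ι) (i : ι) : x i ^ 2 = 1 := by
  have := Fintype.mem_piFinset.mp hx i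
  simp only [mem_insert, mem_singleton] at this
  rcases this with h | h <;> simp [h]

theorem sum_signCube_update_neg (F : (ι → ℝ) → ℝ) (v : ι) :
    ∑ x ∈ signCube ι, F (Function.update x v (-x v)) = ∑ x ∈ signCube ι, F x := by
  have maps : ∀ x ∈ signCube ι, Function.update x v (-x v) ∈ signCube ι := by
    intro x hx
    refine Fintype.mem_piFinset.mpr fun i => ?_
    have := Fintype.mem_piFinset.mp hx
    rcases eq_or_ne i v with rfl | hi
    · have := this i
      simp only [Function.update_self, mem_insert, mem_singleton] at this ⊢
      rcases this with h | h <;> simp [h]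
    · simpa [hi] using this i
  refine sum_nbij' _ _ maps maps (fun x _ => ?_) (fun x _ => ?_) (fun x _ => rfl) <;> simp

theorem sum_signCube_prod_pow (m : ι → ℕ) :
    ∑ x ∈ signCube ι, ∏ i, x i ^ m i = if ∀ i, Even (m i) then 2 ^ Fintype.card ι else 0 := by
  rw [signCube, ← prod_univ_sum (fun _ => ({-1, 1} : Finset ℝ)) fun i t => t ^ m i]
  have coord (i : ι) : ∑ t ∈ ({-1, 1} : Finset ℝ), t ^ m i = if Even (m i) then 2 else 0 := by
    rw [sum_pair (by norm_num), one_pow]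
    rcases Nat.even_or_odd (m i) with h | h
    · rw [h.neg_one_pow, if_pos h]; norm_num
    · rw [h.neg_one_pow, if_neg (Nat.not_even_iff_odd.mpr h)]; norm_num
  simp_rw [coord]
  split_ifs with h
  · simp [h]
  · push Not at h
    obtain ⟨i, hi⟩ := h
    exact prod_eq_zero (mem_univ i) (if_neg hi)

theorem sum_signCube_add_mul_pow_le {A B : (ι → ℝ) → ℝ} {v : ι} {p : ℕ} {a b C : ℝ}
    (hp : 1 ≤ p) (hA : ∀ x, A (Function.update x v (-x v)) = A x)
    (hB : ∀ x, B (Function.update x v (-x v)) = B x) (ha : 0 ≤ a) (hb : 0 ≤ b) (hC : 0 ≤ C)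
    (hAa : ∑ x ∈ signCube ι, A x ^ (2 * p) ≤ C * a ^ p)
    (hBb : ∑ x ∈ signCube ι, B x ^ (2 * p) ≤ C * b ^ p) :
    ∑ x ∈ signCube ι, (A x + x v * B x) ^ (2 * p) ≤ C * (a + (2 * p - 1) * b) ^ p := by
  have hw : (0 : ℝ) ≤ 2 * p - 1 := by
    have : (1 : ℝ) ≤ p := by exact_mod_cast hp
    linarith
  have flip : ∑ x ∈ signCube ι, (A x - x v * B x) ^ (2 * p)
      = ∑ x ∈ signCube ι, (A x + x v * B x) ^ (2 * p) := by
    rw [← sum_signCube_update_neg (fun x => (A x + x v * B x) ^ (2 * p)) v]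
    refine sum_congr rfl fun x _ => ?_
    simp only [hA, hB, Function.update_self]
    ring
  have symmetrize : 2 * ∑ x ∈ signCube ι, (A x + x v * B x) ^ (2 * p)
      ≤ 2 * ∑ x ∈ signCube ι, (A x ^ 2 + (2 * p - 1) * B x ^ 2) ^ p :=
    calc 2 * ∑ x ∈ signCube ι, (A x + x v * B x) ^ (2 * p)
        = ∑ x ∈ signCube ι, ((A x + x v * B x) ^ (2 * p) + (A x - x v * B x) ^ (2 * p)) := by
          rw [sum_add_distrib, flip, two_mul]
      _ ≤ ∑ x ∈ signCube ι, 2 * (A x ^ 2 + (2 * p - 1) * (x v * B x) ^ 2) ^ p :=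
          sum_le_sum fun x _ => add_pow_two_mul_add_sub_pow_two_mul_le _ _ p
      _ = 2 * ∑ x ∈ signCube ι, (A x ^ 2 + (2 * p - 1) * B x ^ 2) ^ p := by
          rw [mul_sum]
          refine sum_congr rfl fun x hx => ?_
          rw [mul_pow, sq_eq_one_of_mem_signCube hx, one_mul]
  have minkowski : ∑ x ∈ signCube ι, (A x ^ 2 + (2 * p - 1) * B x ^ 2) ^ p
      ≤ C * (a + (2 * p - 1) * b) ^ p := by
    refine sum_add_pow_le_of_sum_pow_le hp (fun x _ => sq_nonneg _)
      (fun x _ => mul_nonneg hw (sq_nonneg _)) ha (mul_nonneg hw hb) hC ?_ ?_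
    · simpa only [← pow_mul] using hAa
    · simp only [mul_pow, ← pow_mul, ← mul_sum]
      nlinarith [pow_nonneg hw p]
  linarith

theorem sum_signCube_pow_le (p : ℕ) (hp : 1 ≤ p) (V : Finset ι) (c : Finset ι → ℝ) :
    ∑ x ∈ signCube ι, (∑ S ∈ V.powerset, c S * ∏ i ∈ S, x i) ^ (2 * p)
      ≤ 2 ^ Fintype.card ι * (∑ S ∈ V.powerset, (2 * p - 1 : ℝ) ^ #S * c S ^ 2) ^ p := by
  have hw : (0 : ℝ) ≤ 2 * p - 1 := by
    have : (1 : ℝ) ≤ p := by exact_mod_cast hp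
    linarith
  induction V using Finset.cons_induction generalizing c with
  | empty => simp [card_signCube, pow_mul]
  | cons v V hv ih =>
    have hvS : ∀ S ∈ V.powerset, v ∉ S := fun S hS h => hv (mem_powerset.mp hS h)
    have split (f : Finset ι → ℝ) : ∑ S ∈ (V.cons v hv).powerset, f S
        = ∑ S ∈ V.powerset, f S + ∑ S ∈ V.powerset, f (insert v S) := by
      rw [cons_eq_insert, sum_powerset_insert hv]
    have invariant (c' : Finset ι → ℝ) (x : ι → ℝ) :
        ∑ S ∈ V.powerset, c' S * ∏ i ∈ S, Function.update x v (-x v) i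
          = ∑ S ∈ V.powerset, c' S * ∏ i ∈ S, x i :=
      sum_congr rfl fun S hS => by rw [prod_update_of_notMem (hvS S hS)]
    calc ∑ x ∈ signCube ι, (∑ S ∈ (V.cons v hv).powerset, c S * ∏ i ∈ S, x i) ^ (2 * p)
        = ∑ x ∈ signCube ι, (∑ S ∈ V.powerset, c S * ∏ i ∈ S, x i
            + x v * ∑ S ∈ V.powerset, c (insert v S) * ∏ i ∈ S, x i) ^ (2 * p) := by
          refine sum_congr rfl fun x _ => ?_
          rw [split, mul_sum]
          congr 2
          refine sum_congr rfl fun S hS => ?_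
          rw [prod_insert (hvS S hS)]
          ring
      _ ≤ 2 ^ Fintype.card ι * (∑ S ∈ V.powerset, (2 * p - 1 : ℝ) ^ #S * c S ^ 2
            + (2 * p - 1) * ∑ S ∈ V.powerset, (2 * p - 1 : ℝ) ^ #S * c (insert v S) ^ 2) ^ p :=
          sum_signCube_add_mul_pow_le hp (invariant c) (invariant _)
            (sum_nonneg fun S _ => mul_nonneg (pow_nonneg hw _) (sq_nonneg _))
            (sum_nonneg fun S _ => mul_nonneg (pow_nonneg hw _) (sq_nonneg _))
            (by positivity) (ih c) (ih _)
      _ = _ := by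
          rw [split, mul_sum]
          congr 3
          refine sum_congr rfl fun S hS => ?_
          rw [card_insert_of_notMem (hvS S hS), pow_succ]
          ring

end SignCube

theorem prod_prod_eq_prod_pow_card {ι κ M : Type*} [Fintype ι] [DecidableEq ι] [Fintype κ]
    [CommMonoid M] (g : κ → Finset ι) (x : ι → M) :
    ∏ j, ∏ i ∈ g j, x i = ∏ i, x i ^ #{j | i ∈ g j} := by
  have (j : κ) : ∏ i ∈ g j, x i = ∏ i, if i ∈ g j then x i else 1 := by
    rw [prod_ite_mem, univ_inter]
  simp_rw [this]
  rw [prod_comm]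
  refine prod_congr rfl fun i _ => ?_
  rw [prod_ite, prod_const, prod_const_one, mul_one]

section EvenTuples

variable {ι κ : Type*} [Fintype ι] [DecidableEq ι] [Fintype κ] [DecidableEq κ]

variable (κ) in
def evenTuples (𝒯 : Finset (Finset ι)) : Finset (κ → Finset ι) :=
  {g ∈ Fintype.piFinset fun _ : κ => 𝒯 | ∀ i, Even #{j | i ∈ g j}}

theorem sum_signCube_pow_card_eq (𝒯 : Finset (Finset ι)) :
    ∑ x ∈ signCube ι, (∑ S ∈ 𝒯, ∏ i ∈ S, x i) ^ Fintype.card κ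
      = 2 ^ Fintype.card ι * #(evenTuples κ 𝒯) := by
  rw [← card_univ]
  simp_rw [← prod_const, prod_univ_sum]
  rw [sum_comm]
  simp_rw [prod_prod_eq_prod_pow_card, sum_signCube_prod_pow]
  rw [sum_ite, sum_const_zero, add_zero, sum_const, nsmul_eq_mul, mul_comm, evenTuples]

theorem card_evenTuples_le {𝒯 : Finset (Finset ι)} {p d : ℕ} (hp : 1 ≤ p)
    (hκ : Fintype.card κ = 2 * p) (hd : ∀ S ∈ 𝒯, #S ≤ d) :
    #(evenTuples κ 𝒯) ≤ ((2 * p - 1) ^ d * #𝒯) ^ p := by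
  have hw : ((2 * p - 1 : ℕ) : ℝ) = 2 * p - 1 := by
    rw [Nat.cast_sub (by omega)]; push_cast; ring
  have hw1 : (1 : ℝ) ≤ 2 * p - 1 := by
    rw [← hw]; exact_mod_cast (by omega : 1 ≤ 2 * p - 1)
  set c : Finset ι → ℝ := fun S => if S ∈ 𝒯 then 1 else 0
  have poly (x : ι → ℝ) : ∑ S ∈ univ.powerset, c S * ∏ i ∈ S, x i = ∑ S ∈ 𝒯, ∏ i ∈ S, x i := by
    simp only [c, ite_mul, one_mul, zero_mul, sum_ite_mem, powerset_univ, univ_inter]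
  have weights : ∑ S ∈ univ.powerset, (2 * p - 1 : ℝ) ^ #S * c S ^ 2
      ≤ (2 * p - 1 : ℝ) ^ d * #𝒯 := by
    simp only [c, ite_pow, one_pow, mul_ite, mul_one, zero_pow two_ne_zero, mul_zero,
      sum_ite_mem, powerset_univ, univ_inter]
    calc ∑ S ∈ 𝒯, (2 * p - 1 : ℝ) ^ #S ≤ ∑ S ∈ 𝒯, (2 * p - 1 : ℝ) ^ d :=
          sum_le_sum fun S hS => pow_le_pow_right₀ hw1 (hd S hS)
      _ = _ := by rw [sum_const, nsmul_eq_mul, mul_comm]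
  have bonami := sum_signCube_pow_le p hp univ c
  simp only [poly, ← hκ, sum_signCube_pow_card_eq] at bonami
  have : (#(evenTuples κ 𝒯) : ℝ) ≤ ((2 * p - 1 : ℝ) ^ d * #𝒯) ^ p :=
    le_of_mul_le_mul_left (bonami.trans (by gcongr)) (by positivity)
  rw [← hw] at this
  exact_mod_cast this

end EvenTuples

theorem InLambdaFamily.mono {G : Type*} [AddCommGroup G] {m m' : ℕ} {Λ : Finset G}
    (hΛ : InLambdaFamily m' Λ) (h : m ≤ m') : InLambdaFamily m Λ :=
  fun S hS hne hcard => hΛ S hS hne (hcard.trans h)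

section CharTwo

variable {G κ : Type*} [AddCommGroup G] [Module (ZMod 2) G] [Fintype κ]

theorem nsmul_eq_ite_odd (n : ℕ) (x : G) : n • x = if Odd n then x else 0 := by
  rw [← Nat.cast_smul_eq_nsmul (ZMod 2)]
  split_ifs with h
  · rw [ZMod.natCast_eq_one_iff_odd.mpr h, one_smul]
  · rw [ZMod.natCast_eq_zero_iff_even.mpr (Nat.not_odd_iff_even.mp h), zero_smul]

theorem add_self_eq_zero_of_zmod_two (x : G) : x + x = 0 := by
  rw [← two_nsmul, nsmul_eq_ite_odd, if_neg (by decide)]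

variable [DecidableEq G]

theorem sum_sum_eq_sum_filter_odd (g : κ → Finset G) :
    ∑ j, ∑ x ∈ g j, x = ∑ x ∈ univ.biUnion g with Odd #{j | x ∈ g j}, x := by
  rw [sum_comm' (t' := univ.biUnion g) (s' := fun x => {j | x ∈ g j})
    (fun j x => by simp only [mem_univ, true_and, mem_filter, mem_biUnion]; grind)]
  simp_rw [sum_const, nsmul_eq_ite_odd, sum_filter]

theorem even_card_of_sum_sum_eq_zero {m : ℕ} {Λ : Finset G} (hΛ : InLambdaFamily m Λ)
    {g : κ → Finset G} (hgΛ : ∀ j, g j ⊆ Λ) (hcard : ∑ j, #(g j) ≤ m)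
    (hsum : ∑ j, ∑ x ∈ g j, x = 0) (x : G) : Even #{j | x ∈ g j} := by
  by_contra hx
  set O := {y ∈ univ.biUnion g | Odd #{j | y ∈ g j}}
  have hxO : x ∈ O := by
    obtain ⟨j, hj⟩ := card_pos.mp (Nat.not_even_iff_odd.mp hx).pos
    simp only [O, mem_filter, mem_biUnion, mem_univ, true_and] at hj ⊢
    exact ⟨⟨j, hj⟩, Nat.not_even_iff_odd.mp hx⟩
  refine hΛ O (fun y hy => ?_) ⟨x, hxO⟩ ?_ (sum_sum_eq_sum_filter_odd g ▸ hsum)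
  · obtain ⟨j, -, hj⟩ := mem_biUnion.mp (mem_filter.mp hy).1
    exact hgΛ j hj
  · exact (card_filter_le _ _).trans (card_biUnion_le.trans hcard)

end CharTwo

theorem addEnergy_le_card_evenTuples {G : Type*} [AddCommGroup G] [Module (ZMod 2) G]
    [Fintype G] [DecidableEq G] {Λ Q : Finset G} {d p : ℕ}
    (hΛ : InLambdaFamily (2 * d * p) Λ) {φ : G → Finset G}
    (hφ : ∀ q ∈ Q, φ q ∈ Λ.powersetCard d ∧ ∑ x ∈ φ q, x = q) :
    addEnergy p Q ≤ #(evenTuples (Fin p ⊕ Fin p) (Q.image φ)) := by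
  have hφinj : Set.InjOn φ Q := fun q hq q' hq' h => by
    rw [← (hφ q hq).2, h, (hφ q' hq').2]
  refine card_le_card_of_injOn (fun v => Sum.elim (φ ∘ v.1) (φ ∘ v.2)) ?_ ?_
  · rintro ⟨v, w⟩ hvw
    simp only [coe_filter, mem_product, Fintype.mem_piFinset, Set.mem_ofPred_eq] at hvw
    obtain ⟨⟨hv, hw⟩, hsum⟩ := hvw
    have hsub : ∀ j, Sum.elim (φ ∘ v) (φ ∘ w) j ∈ Λ.powersetCard d := by
      rintro (i | i)
      exacts [(hφ _ (hv i)).1, (hφ _ (hw i)).1]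
    refine mem_filter.mpr ⟨Fintype.mem_piFinset.mpr fun j => ?_, ?_⟩
    · rcases j with i | i
      exacts [mem_image_of_mem φ (hv i), mem_image_of_mem φ (hw i)]
    refine even_card_of_sum_sum_eq_zero hΛ (fun j => (mem_powersetCard.mp (hsub j)).1) ?_ ?_
    · simp only [fun j => (mem_powersetCard.mp (hsub j)).2, sum_const, card_univ,
        Fintype.card_sum, Fintype.card_fin, smul_eq_mul]
      linarith
    · simp only [Fintype.sum_sum_type, Sum.elim_inl, Sum.elim_inr, Function.comp_apply]
      rw [sum_congr rfl fun i _ => (hφ _ (hv i)).2, sum_congr rfl fun i _ => (hφ _ (hw i)).2,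
        hsum, add_self_eq_zero_of_zmod_two]
  · rintro ⟨v, w⟩ hvw ⟨v', w'⟩ hvw' heq
    simp only [coe_filter, mem_product, Fintype.mem_piFinset, Set.mem_ofPred_eq] at hvw hvw'
    have h (i) := congrFun heq i
    simp only [Sum.forall, Sum.elim_inl, Sum.elim_inr, Function.comp_apply] at h
    exact Prod.ext (funext fun i => hφinj (hvw.1.1 i) (hvw'.1.1 i) (h.1 i))
      (funext fun i => hφinj (hvw.1.2 i) (hvw'.1.2 i) (h.2 i))

theorem stmt3_general {n : ℕ} (k d : ℕ)
    (Λ : Finset (Fin n → ZMod 2)) (hΛ : InLambdaFamily (2 * d * k) Λ)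
    (Q : Finset (Fin n → ZMod 2)) (hQ : Q ⊆ dDot d Λ) :
    ∀ p : ℕ, 2 ≤ p → p ≤ k →
      addEnergy p Q ≤ 2 ^ (8 * d * p) * p ^ (d * p) * Q.card ^ p := by
  intro p hp hpk
  have hrep : ∀ q ∈ Q, ∃ S, S ∈ Λ.powersetCard d ∧ ∑ x ∈ S, x = q :=
    fun q hq => mem_image.mp (hQ hq)
  choose! φ hφ using hrep
  calc addEnergy p Q ≤ #(evenTuples (Fin p ⊕ Fin p) (Q.image φ)) :=
        addEnergy_le_card_evenTuples (hΛ.mono (by gcongr)) hφ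
    _ ≤ ((2 * p - 1) ^ d * #(Q.image φ)) ^ p :=
        card_evenTuples_le (by omega) (by simp [two_mul]) fun S hS => by
          obtain ⟨q, hq, rfl⟩ := mem_image.mp hS
          exact (mem_powersetCard.mp (hφ q hq).1).2.le
    _ ≤ ((2 * p) ^ d * #Q) ^ p :=
        Nat.pow_le_pow_left (Nat.mul_le_mul (Nat.pow_le_pow_left (by omega) d) card_image_le) p
    _ = 2 ^ (d * p) * p ^ (d * p) * #Q ^ p := by ring
    _ ≤ 2 ^ (8 * d * p) * p ^ (d * p) * #Q ^ p := by gcongr <;> omega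

theorem stmt3 {n : ℕ} (k d : ℕ) (hk : 2 ≤ k) (hd : 1 ≤ d)
    (Λ : Finset (Fin n → ZMod 2)) (hΛ : InLambdaFamily (2 * d * k) Λ)
    (hΛcard : 4 * d ^ 2 ≤ Λ.card)
    (Q : Finset (Fin n → ZMod 2)) (hQ : Q ⊆ dDot d Λ) :
    ∀ p : ℕ, 2 ≤ p → p ≤ k →
      addEnergy p Q ≤ 2 ^ (8 * d * p) * p ^ (d * p) * Q.card ^ p :=
  stmt3_general k d Λ hΛ Q hQ
end

section
/- Let p be a positive integer, let Λ ⊆ F_2^n belong to the family 𝚲(2p), and let E_1, …, E_{2p} be subsets of Λ. Suppose [2p] = C_1 ⊔ ⋯ ⊔ C_r is a partition into r classes. For S* ⊆ [2p] with |S*| = p, let M(S*) be the p×p matrix with entries m_{ij} = |E_i ∩ E_j| for i ∈ S*, j ∈ [2p]∖S*. Then the number of solutions of λ_1 + ⋯ + λ_{2p} = 0 with λ_i ∈ E_i (i = 1,…,2p) is at most Σ_{S*} per M(S*), where the sum is over all sets S* ⊆ [2p] of size p that contain at least one element from every class C_i with |C_i| ≥ 2. -/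
open Finset

/-- The permanent of the matrix `M(S*) = (|E_i ∩ E_j|)_{i ∈ S*, j ∉ S*}`:
the sum over bijections `σ : S* → complement of S*` of `∏_{i∈S*} |E_i ∩ E_{σ(i)}|`. -/
def perM {n p : ℕ} (E : Fin (2 * p) → Finset (Fin n → ZMod 2))
    (S : Finset (Fin (2 * p))) : ℕ :=
  ∑ σ : {i // i ∈ S} ≃ {i // i ∈ Sᶜ},
    ∏ i : {i // i ∈ S}, (E i.val ∩ E (σ i).val).card

/-!
Since `Λ` contains no nonempty zero-sum set of size at most `2p`, every value of a solution
`λ` is taken an even number of times (the values taken an odd number of times form such a set,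
and their sum is `∑ λ_i = 0`). Pairing equal values gives a fixed-point-free involution `f`
of `[2p]` with `λ ∘ f = λ`. A transversal `S*` of the pairs of `f` can be chosen to meet every
class `C_i` with `|C_i| ≥ 2`: a class containing a whole pair is met automatically, and the
remaining classes meet at least two pairs each while every pair meets at most two classes, so
Hall's theorem assigns them distinct pairs. Then `λ` is recovered from `S*`, the bijection
`f : S* → [2p] ∖ S*` and the values `λ_i ∈ E_i ∩ E_{f(i)}`, `i ∈ S*`, which are counted by
`per M(S*)`.
-/

open Function

theorem ZModModule.nsmul_eq_ite_even {G : Type*} [AddCommGroup G] [Module (ZMod 2) G] (k : ℕ)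
    (x : G) : k • x = if Even k then 0 else x := by
  obtain ⟨m, rfl | rfl⟩ := Nat.even_or_odd' k
  · simp [mul_nsmul', two_nsmul, ZModModule.add_self]
  · simp [succ_nsmul, mul_nsmul', ZModModule.add_self, Nat.not_even_bit1]

theorem even_card_fiber_of_sum_eq_zero {ι G : Type*} [Fintype ι] [AddCommGroup G]
    [Module (ZMod 2) G] [DecidableEq G] {m : ℕ} {Λ : Finset G}
    (hΛ : InLambdaFamily m Λ) (hι : Fintype.card ι ≤ m) {lam : ι → G}
    (hlam : ∀ i, lam i ∈ Λ) (hsum : ∑ i, lam i = 0) (x : G) : Even #{i | lam i = x} := by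
  by_contra hx
  let T := {y ∈ univ.image lam | ¬Even #{i | lam i = y}}
  have hTΛ : T ⊆ Λ := fun y hy => by
    obtain ⟨i, -, rfl⟩ := mem_image.1 (mem_filter.1 hy).1
    exact hlam i
  have hTx : x ∈ T := by
    obtain ⟨i, hi⟩ := card_pos.1 (Nat.pos_of_ne_zero fun h => hx (h ▸ Even.zero))
    exact mem_filter.2 ⟨mem_image.2 ⟨i, mem_univ i, (mem_filter.1 hi).2⟩, hx⟩
  have hTcard : #T ≤ m :=
    (card_filter_le _ _).trans (card_image_le.trans (by simpa using hι))
  refine hΛ T hTΛ ⟨x, hTx⟩ hTcard ?_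
  calc ∑ y ∈ T, y = ∑ y ∈ univ.image lam, #{i | lam i = y} • y := by
        simp only [T, sum_filter, ZModModule.nsmul_eq_ite_even, ite_not]
    _ = 0 := (sum_comp (fun y => y) lam).symm.trans hsum

theorem exists_involutive_ne_of_even_card (T : Type*) [Fintype T]
    (h : Even (Fintype.card T)) : ∃ g : T → T, Involutive g ∧ ∀ x, g x ≠ x := by
  obtain ⟨k, hk⟩ := h
  let e : T ≃ Fin k × Bool := Fintype.equivOfCardEq (by simp [hk, mul_two])
  refine ⟨fun x => e.symm (Prod.map id not (e x)), fun x => by simp [Prod.map], fun x hx => ?_⟩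
  have := congrArg (fun x => (e x).2) hx
  simp at this

theorem exists_involutive_ne_and_comp_eq {ι β : Type*} [Fintype ι] [DecidableEq β]
    (lam : ι → β) (h : ∀ y, Even #{i | lam i = y}) :
    ∃ f : ι → ι, Involutive f ∧ (∀ i, f i ≠ i) ∧ ∀ i, lam (f i) = lam i := by
  choose g hg hne using fun y => exists_involutive_ne_of_even_card {i // lam i = y}
    (by rw [Fintype.card_subtype]; exact h y)
  let f i := (g (lam i) ⟨i, rfl⟩).1
  have hf : ∀ y (z : {i // lam i = y}), f z = g y z := by rintro y ⟨j, rfl⟩; rfl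
  refine ⟨f, fun i => ?_, fun i hi => hne _ _ (Subtype.ext hi), fun i => (g _ _).2⟩
  rw [hf (lam i) (g _ _), hg]

section Transversal

variable {α : Type*} {f : α → α}

theorem Function.Involutive.sym2_eq_iff (hf : Involutive f) {a b : α} :
    s(a, f a) = s(b, f b) ↔ a = b ∨ a = f b := by
  rw [Sym2.eq_iff, hf.injective.eq_iff]
  constructor
  · rintro (⟨h, -⟩ | ⟨h, -⟩) <;> simp [h]
  · rintro (h | rfl)
    · exact .inl ⟨h, h⟩
    · exact .inr ⟨rfl, hf b⟩

variable [DecidableEq α]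

theorem exists_transversal_superset [Fintype α] (hf : Involutive f) (hne : ∀ x, f x ≠ x)
    {W : Finset α} (hW : ∀ x ∈ W, f x ∉ W) :
    ∃ S : Finset α, W ⊆ S ∧ ∀ x, x ∈ S ↔ f x ∉ S := by
  -- `S` takes from each pair `s(y, f y)` its point in `W` if there is one, else the point `g` picks.
  choose g hg using fun e : Sym2 α => (⟨_, e.out_fst_mem⟩ : ∃ x, x ∈ e)
  have hgx : ∀ x, g s(x, f x) = x ∨ g s(x, f x) = f x := fun x => Sym2.mem_iff.1 (hg _)
  have hgf : ∀ x, g s(f x, x) = g s(x, f x) := fun x => by rw [Sym2.eq_swap]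
  refine ⟨({y | y ∈ W ∨ f y ∉ W ∧ g s(y, f y) = y} : Finset α), fun x hx => by simp [hx],
    fun x => ?_⟩
  simp only [mem_filter, mem_univ, true_and, hf x, hgf]
  grind [hW x, hgx x, hne x]

theorem card_filter_mem_le_one {ι : Type*} {C : ι → Finset α} (hC : Pairwise (Disjoint on C))
    (s : Finset ι) (x : α) : #{i ∈ s | x ∈ C i} ≤ 1 :=
  card_le_one.2 fun _ hi _ hj => by_contra fun hij =>
    disjoint_left.1 (hC hij) (mem_filter.1 hi).2 (mem_filter.1 hj).2

theorem exists_injective_sym2_of_two_le_card (hf : Involutive f) {ι : Type*}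
    {C : ι → Finset α} (hC : Pairwise (Disjoint on C)) (hcard : ∀ i, 2 ≤ #(C i))
    (hsep : ∀ i, ∀ x ∈ C i, f x ∉ C i) :
    ∃ w : ι → α, (∀ i, w i ∈ C i) ∧ Injective fun i => s(w i, f (w i)) := by
  classical
  let t i := (C i).image fun x => s(x, f x)
  have hall : ∀ s : Finset ι, #s ≤ #(s.biUnion t) := by
    intro s
    suffices #s * 2 ≤ #(s.biUnion t) * 2 by omega
    refine card_mul_le_card_mul (fun i e => e ∈ t i) (fun i hi => ?_) (fun e he => ?_)
    · have hinj : Set.InjOn (fun x => s(x, f x)) (C i) := fun x hx y hy hxy =>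
        (hf.sym2_eq_iff.1 hxy).resolve_right fun h => hsep i y hy (h ▸ hx)
      rw [bipartiteAbove, filter_mem_eq_inter, inter_eq_right.2 (subset_biUnion_of_mem t hi),
        card_image_of_injOn hinj]
      exact hcard i
    · obtain ⟨j, -, he⟩ := mem_biUnion.1 he
      obtain ⟨x, -, rfl⟩ := mem_image.1 he
      calc #(s.bipartiteBelow (fun i e => e ∈ t i) s(x, f x))
          ≤ #({i ∈ s | x ∈ C i} ∪ {i ∈ s | f x ∈ C i}) := by
            refine card_le_card fun i hi => ?_
            obtain ⟨his, hi⟩ := mem_filter.1 hi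
            obtain ⟨y, hy, hyx⟩ := mem_image.1 hi
            rcases hf.sym2_eq_iff.1 hyx with rfl | rfl
            · exact mem_union_left _ (mem_filter.2 ⟨his, hy⟩)
            · exact mem_union_right _ (mem_filter.2 ⟨his, hy⟩)
        _ ≤ 1 + 1 := (card_union_le _ _).trans
            (add_le_add (card_filter_mem_le_one hC s x) (card_filter_mem_le_one hC s (f x)))
  obtain ⟨e, he, het⟩ := (all_card_le_biUnion_card_iff_exists_injective t).1 hall
  choose w hwC hwe using fun i => mem_image.1 (het i)
  exact ⟨w, hwC, fun i j hij => he (by simpa only [hwe] using hij)⟩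

theorem exists_transversal_inter_nonempty [Fintype α] (hf : Involutive f)
    (hne : ∀ x, f x ≠ x) {κ : Type*} (C : κ → Finset α) (hC : Pairwise (Disjoint on C)) :
    ∃ S : Finset α, (∀ x, x ∈ S ↔ f x ∉ S) ∧ ∀ i, 2 ≤ #(C i) → (S ∩ C i).Nonempty := by
  classical
  let B := {i // 2 ≤ #(C i) ∧ ∀ x ∈ C i, f x ∉ C i}
  obtain ⟨w, hwC, hw⟩ := exists_injective_sym2_of_two_le_card hf (C := fun i : B => C i)
    (hC.comp_of_injective Subtype.val_injective) (fun i => i.2.1) (fun i => i.2.2)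
  let W : Finset α := {x | ∃ i, w i = x}
  have hW : ∀ x ∈ W, f x ∉ W := by
    simp only [W, mem_filter, mem_univ, true_and, not_exists]
    rintro _ ⟨i, rfl⟩ j hj
    obtain rfl : i = j := hw (by dsimp only; rw [hj, hf (w i), Sym2.eq_swap])
    exact hne (w i) hj.symm
  obtain ⟨S, hWS, hS⟩ := exists_transversal_superset hf hne hW
  refine ⟨S, hS, fun i hi => ?_⟩
  by_cases hsep : ∀ x ∈ C i, f x ∉ C i
  · exact ⟨w ⟨i, hi, hsep⟩, mem_inter.2 ⟨hWS (mem_filter.2 ⟨mem_univ _, _, rfl⟩), hwC _⟩⟩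
  · obtain ⟨x, hx, hfx⟩ : ∃ x ∈ C i, f x ∈ C i := by simpa using hsep
    by_cases hxS : x ∈ S
    · exact ⟨x, mem_inter.2 ⟨hxS, hx⟩⟩
    · exact ⟨f x, mem_inter.2 ⟨not_not.1 (mt (hS x).2 hxS), hfx⟩⟩

end Transversal

section Pairing

variable {ι : Type*} [Fintype ι] [DecidableEq ι]

def equivComplOfInvolutive {f : ι → ι} (hf : Involutive f) {S : Finset ι}
    (hS : ∀ x, x ∈ S ↔ f x ∉ S) : {x // x ∈ S} ≃ {x // x ∈ Sᶜ} where
  toFun x := ⟨f x, mem_compl.2 ((hS x).1 x.2)⟩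
  invFun y := ⟨f y, not_not.1 (mt (hS y).2 (mem_compl.1 y.2))⟩
  left_inv x := Subtype.ext (hf x)
  right_inv y := Subtype.ext (hf y)

theorem two_mul_card_eq_of_equiv_compl {S : Finset ι} (σ : {x // x ∈ S} ≃ {x // x ∈ Sᶜ}) :
    2 * #S = Fintype.card ι := by
  have h := Fintype.card_congr σ
  rw [Fintype.card_coe, Fintype.card_coe, card_compl] at h
  have := card_le_univ S
  omega

def extendAlong {β : Type*} (S : Finset ι) (σ : {x // x ∈ S} ≃ {x // x ∈ Sᶜ})
    (v : {x // x ∈ S} → β) (i : ι) : β :=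
  if h : i ∈ S then v ⟨i, h⟩ else v (σ.symm ⟨i, mem_compl.2 h⟩)

theorem extendAlong_restrict {β : Type*} {S : Finset ι} (σ : {x // x ∈ S} ≃ {x // x ∈ Sᶜ})
    {lam : ι → β} (h : ∀ x, lam (σ x) = lam x) : extendAlong S σ (fun x => lam x) = lam := by
  funext i
  by_cases hi : i ∈ S
  · simp [extendAlong, hi]
  · simp only [extendAlong, hi, dite_false]
    rw [← h, Equiv.apply_symm_apply]

end Pairing

theorem card_le_sum_perM {n p : ℕ} (E : Fin (2 * p) → Finset (Fin n → ZMod 2))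
    (F : Finset (Finset (Fin (2 * p)))) (A : Finset (Fin (2 * p) → Fin n → ZMod 2))
    (hA : ∀ lam ∈ A, (∀ i, lam i ∈ E i) ∧
      ∃ S ∈ F, ∃ σ : {i // i ∈ S} ≃ {i // i ∈ Sᶜ}, ∀ i, lam (σ i) = lam i) :
    #A ≤ ∑ S ∈ F, perM E S := by
  let codes := F.sigma fun S => (univ : Finset ({i // i ∈ S} ≃ {i // i ∈ Sᶜ})).sigma
    fun σ => Fintype.piFinset fun i : {i // i ∈ S} => E i ∩ E (σ i)
  have hcodes : #codes = ∑ S ∈ F, perM E S := by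
    simp only [codes, card_sigma, perM, Fintype.card_piFinset]
  refine hcodes ▸ card_le_card_of_surjOn (fun c => extendAlong c.1 c.2.1 c.2.2) ?_
  intro lam hlam
  obtain ⟨hE, S, hS, σ, hσ⟩ := hA lam hlam
  refine ⟨⟨S, σ, fun i => lam i⟩, ?_, extendAlong_restrict σ hσ⟩
  simp only [codes, coe_sigma, Set.mem_sigma_iff, mem_coe, hS, mem_univ, Fintype.mem_piFinset,
    mem_inter, true_and]
  exact fun i => ⟨hE i, hσ i ▸ hE (σ i)⟩

theorem stmt10_general {n : ℕ} (p : ℕ)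
    (Λ : Finset (Fin n → ZMod 2)) (hΛ : InLambdaFamily (2 * p) Λ)
    (E : Fin (2 * p) → Finset (Fin n → ZMod 2)) (hE : ∀ i, E i ⊆ Λ)
    (r : ℕ) (C : Fin r → Finset (Fin (2 * p)))
    (hCdisj : ∀ i j, i ≠ j → Disjoint (C i) (C j)) :
    ((Fintype.piFinset fun i : Fin (2 * p) => E i).filter
        fun lam => ∑ i, lam i = 0).card ≤
      ∑ S ∈ ((Finset.univ : Finset (Fin (2 * p))).powersetCard p).filter
          (fun S => ∀ i, 2 ≤ (C i).card → (S ∩ C i).Nonempty),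
        perM E S := by
  refine card_le_sum_perM E _ _ fun lam hlam => ?_
  obtain ⟨hlamE, hsum⟩ := mem_filter.1 hlam
  rw [Fintype.mem_piFinset] at hlamE
  have heven := even_card_fiber_of_sum_eq_zero hΛ (by simp) (fun i => hE i (hlamE i)) hsum
  obtain ⟨f, hf, hne, hlamf⟩ := exists_involutive_ne_and_comp_eq lam heven
  obtain ⟨S, hS, hSC⟩ := exists_transversal_inter_nonempty hf hne C fun i j => hCdisj i j
  let σ := equivComplOfInvolutive hf hS
  have hcard : #S = p := by
    have := two_mul_card_eq_of_equiv_compl σ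
    rw [Fintype.card_fin] at this
    omega
  exact ⟨hlamE, S, mem_filter.2 ⟨mem_powersetCard_univ.2 hcard, hSC⟩, σ, fun i => hlamf i⟩

theorem stmt10 {n : ℕ} (p : ℕ) (hp : 0 < p)
    (Λ : Finset (Fin n → ZMod 2)) (hΛ : InLambdaFamily (2 * p) Λ)
    (E : Fin (2 * p) → Finset (Fin n → ZMod 2)) (hE : ∀ i, E i ⊆ Λ)
    (r : ℕ) (C : Fin r → Finset (Fin (2 * p)))
    (hCdisj : ∀ i j, i ≠ j → Disjoint (C i) (C j))
    (hCcover : ∀ x, ∃ i, x ∈ C i) :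
    ((Fintype.piFinset fun i : Fin (2 * p) => E i).filter
        fun lam => ∑ i, lam i = 0).card ≤
      ∑ S ∈ ((Finset.univ : Finset (Fin (2 * p))).powersetCard p).filter
          (fun S => ∀ i, 2 ≤ (C i).card → (S ∩ C i).Nonempty),
        perM E S :=
  stmt10_general p Λ hΛ E hE r C hCdisj
end
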